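/- arXiv:2005.05195 — 8 statements merged into one kernel-verified Lean document; each statement's English description precedes it below -/
import Mathlib

section
/- Let p ≥ 1 and 1 ≤ k ≤ p. The optimal value of sparse PCA equals the optimal value of its mixed-integer semidefinite reformulation; precisely, sup { xᵀΣx : x ∈ ℝ^p, ‖x‖₂ = 1, ‖x‖₀ ≤ k } = sup { ⟨Σ, X⟩ : X ∈ ℝ^{p×p}, X ⪰ 0, tr(X) = 1, and there exists z ∈ {0,1}^p with ∑_{i=1}^p z_i ≤ k such that |X_{i,j}| ≤ M_{i,j} z_i for all i,j ∈ [p] and ∑_{j=1}^p |X_{i,j}| ≤ √k · z_i for all i ∈ [p] }, where M_{i,i} = 1 and M_{i,j} = 1/2 for i ≠ j. -/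
/-!
A sparse unit vector `x` gives the feasible point `X = x xᵀ`, with `z` the indicator of the
support of `x`, and the same objective value: the entrywise bounds follow from `‖x‖₂ = 1`, the
row-sum bound from Cauchy–Schwarz on the support. Conversely, a feasible `X` is positive
semidefinite of unit trace, so `⟨Σ, X⟩ = ∑ λₗ uₗᵀ Σ uₗ` is a convex combination over its unit
eigenvectors; some `uₗ` with `λₗ > 0` does at least as well, and it lies in the range of `X`,
hence is supported where `z = 1`. Each set of values thus dominates the other, so the suprema
agree.
-/

open Finset Matrix

variable {ι : Type*} [Fintype ι]

lemma exists_pos_and_sum_mul_le_of_sum_eq_one {w : ι → ℝ} (hw : ∀ l, 0 ≤ w l)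
    (hw1 : ∑ l, w l = 1) (q : ι → ℝ) : ∃ l, 0 < w l ∧ ∑ l', w l' * q l' ≤ q l := by
  by_contra! hlt
  set v := ∑ l, w l * q l
  obtain ⟨l₀, -, hl₀⟩ : ∃ l ∈ univ, (0 : ℝ) < w l := exists_lt_of_sum_lt (by simp [hw1])
  have hle : ∀ l, w l * q l ≤ w l * v := fun l => by
    rcases (hw l).eq_or_lt with h | h
    · simp [← h]
    · exact mul_le_mul_of_nonneg_left (hlt l h).le h.le
  have : v < v := calc
    v < ∑ l, w l * v :=
      sum_lt_sum (fun l _ => hle l) ⟨l₀, mem_univ _, mul_lt_mul_of_pos_left (hlt l₀ hl₀) hl₀⟩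
    _ = v := by rw [← sum_mul, hw1, one_mul]
  exact this.false

namespace Matrix.IsHermitian

variable [DecidableEq ι] {X : Matrix ι ι ℝ} (hX : X.IsHermitian)
include hX

lemma apply_eq_sum_eigenvalues_mul (i j : ι) :
    X i j = ∑ l, hX.eigenvalues l * hX.eigenvectorBasis l i * hX.eigenvectorBasis l j := by
  conv_lhs => rw [hX.spectral_theorem]
  simp [Matrix.mul_apply, Unitary.conjStarAlgAut_apply, diagonal_apply, mul_comm, mul_assoc]

lemma sum_sq_eigenvectorBasis (l : ι) : ∑ i, hX.eigenvectorBasis l i ^ 2 = 1 := by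
  rw [← EuclideanSpace.real_norm_sq_eq, hX.eigenvectorBasis.orthonormal.1 l, one_pow]

lemma sum_mul_apply_eq_sum_eigenvalues_mul (S : Matrix ι ι ℝ) :
    ∑ i, ∑ j, S i j * X i j = ∑ l, hX.eigenvalues l *
      ∑ i, ∑ j, hX.eigenvectorBasis l i * S i j * hX.eigenvectorBasis l j := by
  simp_rw [hX.apply_eq_sum_eigenvalues_mul, mul_sum]
  conv_rhs => rw [sum_comm]; enter [2, i]; rw [sum_comm]
  exact sum_congr rfl fun i _ => sum_congr rfl fun j _ => sum_congr rfl fun l _ => by ring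

lemma eigenvectorBasis_apply_eq_zero {l : ι} (hl : hX.eigenvalues l ≠ 0) {i : ι}
    (hi : ∀ j, X i j = 0) : hX.eigenvectorBasis l i = 0 := by
  have h := congrFun (hX.mulVec_eigenvectorBasis l) i
  simp only [mulVec, dotProduct, hi, zero_mul, sum_const_zero, Pi.smul_apply, smul_eq_mul] at h
  exact (mul_eq_zero.mp h.symm).resolve_left hl

end Matrix.IsHermitian

theorem Matrix.PosSemidef.exists_sum_sq_eq_one_support_subset_and_le [DecidableEq ι]
    {X : Matrix ι ι ℝ} (hX : X.PosSemidef) (htr : X.trace = 1) (S : Matrix ι ι ℝ)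
    {s : Finset ι} (hs : ∀ i ∉ s, ∀ j, X i j = 0) :
    ∃ x : ι → ℝ, ∑ i, x i ^ 2 = 1 ∧ ({i | x i ≠ 0} : Finset ι) ⊆ s ∧
      ∑ i, ∑ j, S i j * X i j ≤ ∑ i, ∑ j, x i * S i j * x j := by
  have hsum : ∑ l, hX.1.eigenvalues l = 1 := by
    exact_mod_cast hX.1.trace_eq_sum_eigenvalues.symm.trans htr
  obtain ⟨l, hl, hle⟩ := exists_pos_and_sum_mul_le_of_sum_eq_one hX.eigenvalues_nonneg hsum
    fun l => ∑ i, ∑ j, hX.1.eigenvectorBasis l i * S i j * hX.1.eigenvectorBasis l j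
  refine ⟨hX.1.eigenvectorBasis l, hX.1.sum_sq_eigenvectorBasis l, fun i hi => ?_, ?_⟩
  · by_contra his
    exact (mem_filter.mp hi).2 (hX.1.eigenvectorBasis_apply_eq_zero hl.ne' (hs i his))
  · rwa [hX.1.sum_mul_apply_eq_sum_eigenvalues_mul S]

section UnitVector

variable {x : ι → ℝ} (hx : ∑ i, x i ^ 2 = 1)
include hx

lemma abs_le_one_of_sum_sq_eq_one (i : ι) : |x i| ≤ 1 := by
  rw [← sq_le_one_iff_abs_le_one, ← hx]
  exact single_le_sum (fun j _ => sq_nonneg (x j)) (mem_univ i)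

lemma abs_mul_le_ite_of_sum_sq_eq_one [DecidableEq ι] (i j : ι) :
    |x i * x j| ≤ if i = j then 1 else 1 / 2 := by
  rw [abs_mul]
  split_ifs with hij
  · subst hij
    exact mul_le_one₀ (abs_le_one_of_sum_sq_eq_one hx i) (abs_nonneg _)
      (abs_le_one_of_sum_sq_eq_one hx i)
  · have hpair : x i ^ 2 + x j ^ 2 ≤ 1 := by
      rw [← sum_pair (f := fun l => x l ^ 2) hij, ← hx]
      exact sum_le_univ_sum_of_nonneg fun l => sq_nonneg (x l)
    nlinarith [sq_nonneg (|x i| - |x j|), sq_abs (x i), sq_abs (x j)]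

lemma sum_abs_le_sqrt_of_sum_sq_eq_one {k : ℕ} (hk : #{i | x i ≠ 0} ≤ k) :
    ∑ i, |x i| ≤ √k := by
  set s : Finset ι := {i | x i ≠ 0}
  have hs_abs : ∑ i ∈ s, |x i| = ∑ i, |x i| := sum_filter_of_ne fun i _ h => abs_ne_zero.mp h
  have hs_sq : ∑ i ∈ s, |x i| ^ 2 ≤ 1 := by
    simpa only [sq_abs, ← hx] using sum_le_univ_sum_of_nonneg fun i => sq_nonneg (x i)
  apply Real.le_sqrt_of_sq_le
  calc (∑ i, |x i|) ^ 2 = (∑ i ∈ s, |x i|) ^ 2 := by rw [hs_abs]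
    _ ≤ #s * ∑ i ∈ s, |x i| ^ 2 := sq_sum_le_card_mul_sum_sq
    _ ≤ k * 1 := by gcongr
    _ = k := mul_one _

lemma sum_abs_vecMulVec_self_le_sqrt {k : ℕ} (hk : #{i | x i ≠ 0} ≤ k) (i : ι) :
    ∑ j, |vecMulVec x x i j| ≤ √k :=
  calc ∑ j, |vecMulVec x x i j| = |x i| * ∑ j, |x j| := by
        simp only [vecMulVec_apply, abs_mul, mul_sum]
    _ ≤ 1 * √k := mul_le_mul (abs_le_one_of_sum_sq_eq_one hx i)
        (sum_abs_le_sqrt_of_sum_sq_eq_one hx hk) (by positivity) zero_le_one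
    _ = √k := one_mul _

end UnitVector

lemma sum_mul_vecMulVec_self (S : Matrix ι ι ℝ) (x : ι → ℝ) :
    ∑ i, ∑ j, S i j * vecMulVec x x i j = ∑ i, ∑ j, x i * S i j * x j :=
  sum_congr rfl fun i _ => sum_congr rfl fun j _ => by rw [vecMulVec_apply]; ring

lemma natCast_card_filter_eq_one_eq_sum {z : ι → ℝ} (hz : ∀ i, z i = 0 ∨ z i = 1) :
    (#{i | z i = 1} : ℝ) = ∑ i, z i := by
  rw [natCast_card_filter]
  exact sum_congr rfl fun i _ => by rcases hz i with h | h <;> simp [h]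

theorem sparsePCA_eq_misdo_general (p k : ℕ) (S : Matrix (Fin p) (Fin p) ℝ) :
    sSup {v : ℝ | ∃ x : Fin p → ℝ,
        (∑ i, x i ^ 2) = 1 ∧
        (Finset.univ.filter (fun i => x i ≠ 0)).card ≤ k ∧
        v = ∑ i, ∑ j, x i * S i j * x j} =
    sSup {v : ℝ | ∃ (X : Matrix (Fin p) (Fin p) ℝ) (z : Fin p → ℝ),
        X.PosSemidef ∧ X.trace = 1 ∧
        (∀ i, z i = 0 ∨ z i = 1) ∧ (∑ i, z i) ≤ (k : ℝ) ∧
        (∀ i j, |X i j| ≤ (if i = j then (1 : ℝ) else 1 / 2) * z i) ∧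
        (∀ i, ∑ j, |X i j| ≤ Real.sqrt k * z i) ∧
        v = ∑ i, ∑ j, S i j * X i j} := by
  apply csSup_eq_csSup_of_forall_exists_le
  · rintro _ ⟨x, hx, hxk, rfl⟩
    refine ⟨_, ⟨vecMulVec x x, fun i => if x i ≠ 0 then 1 else 0, ?_, ?_, ?_, ?_, ?_, ?_, rfl⟩,
      (sum_mul_vecMulVec_self S x).ge⟩
    · simpa using posSemidef_vecMulVec_self_star x
    · simpa [dotProduct, sq] using hx
    · intro i; by_cases h : x i = 0 <;> simp [h]
    · rw [sum_boole]; exact_mod_cast hxk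
    · intro i j; by_cases h : x i = 0
      · simp [h, vecMulVec_apply]
      · simpa [h, vecMulVec_apply] using abs_mul_le_ite_of_sum_sq_eq_one hx i j
    · intro i; by_cases h : x i = 0
      · simp [h, vecMulVec_apply]
      · simpa [h] using sum_abs_vecMulVec_self_le_sqrt hx hxk i
  · rintro _ ⟨X, z, hX, htr, hz, hzk, hM, -, rfl⟩
    have hrows : ∀ i ∉ ({i | z i = 1} : Finset (Fin p)), ∀ j, X i j = 0 := fun i hi j => by
      have hzi : z i = 0 := (hz i).resolve_right (by simpa using hi)
      simpa [hzi] using hM i j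
    obtain ⟨x, hx, hxs, hle⟩ := hX.exists_sum_sq_eq_one_support_subset_and_le htr S hrows
    have hzk' : #{i | z i = 1} ≤ k := by
      exact_mod_cast (natCast_card_filter_eq_one_eq_sum hz).trans_le hzk
    exact ⟨_, ⟨x, hx, (card_le_card hxs).trans hzk', rfl⟩, hle⟩

/-- The optimal value of sparse PCA equals the optimal value of its
mixed-integer semidefinite reformulation. -/
theorem sparsePCA_eq_misdo (p k : ℕ) (hp : 1 ≤ p) (hk1 : 1 ≤ k) (hkp : k ≤ p)
    (S : Matrix (Fin p) (Fin p) ℝ) (hS : S.PosSemidef) :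
    sSup {v : ℝ | ∃ x : Fin p → ℝ,
        (∑ i, x i ^ 2) = 1 ∧
        (Finset.univ.filter (fun i => x i ≠ 0)).card ≤ k ∧
        v = ∑ i, ∑ j, x i * S i j * x j} =
    sSup {v : ℝ | ∃ (X : Matrix (Fin p) (Fin p) ℝ) (z : Fin p → ℝ),
        X.PosSemidef ∧ X.trace = 1 ∧
        (∀ i, z i = 0 ∨ z i = 1) ∧ (∑ i, z i) ≤ (k : ℝ) ∧
        (∀ i j, |X i j| ≤ (if i = j then (1 : ℝ) else 1 / 2) * z i) ∧
        (∀ i, ∑ j, |X i j| ≤ Real.sqrt k * z i) ∧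
        v = ∑ i, ∑ j, S i j * X i j} :=
  sparsePCA_eq_misdo_general p k S
end

section
/- Let X ∈ ℝ^{p×p} satisfy X ⪰ 0 and tr(X) = 1, and let z ∈ {0,1}^p with ∑_{i=1}^p z_i ≤ k be such that X_{i,j} = 0 whenever z_i = 0. Then there exists x ∈ ℝ^p with ‖x‖₂ = 1, ‖x‖₀ ≤ k, and xᵀΣx ≥ ⟨Σ, X⟩. -/
/-!
Diagonalize `X = ∑ μᵢ vᵢ vᵢᵀ` with orthonormal eigenvectors `vᵢ`. Then
`⟨Σ, X⟩ = ∑ μᵢ vᵢᵀ Σ vᵢ` is a convex combination (`μᵢ ≥ 0`, `∑ μᵢ = tr X = 1`), so some unit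
eigenvector `vᵢ` with `μᵢ ≠ 0` has `vᵢᵀ Σ vᵢ ≥ ⟨Σ, X⟩`. An eigenvector for a nonzero eigenvalue
vanishes wherever the corresponding row of `X` does, hence off the support of `z`, which has at
most `k` elements.
-/

open Finset Matrix

theorem Finset.exists_ne_zero_and_weighted_sum_le {ι K : Type*} [Fintype ι] [Field K]
    [LinearOrder K] [IsStrictOrderedRing K] (w f : ι → K) (hw : ∀ i, 0 ≤ w i)
    (hsum : ∑ i, w i = 1) :
    ∃ i, w i ≠ 0 ∧ ∑ j, w j * f j ≤ f i := by
  classical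
  set c := ∑ j, w j * f j
  have hsupp : ∀ g : ι → K, ∑ j ∈ univ.filter (w · ≠ 0), w j * g j = ∑ j, w j * g j :=
    fun g ↦ sum_filter_of_ne fun j _ h ↦ left_ne_zero_of_mul h
  have hne : (univ.filter (w · ≠ 0)).Nonempty := by
    by_contra h
    have h0 : ∑ i, w i = 0 := by simpa [not_nonempty_iff_eq_empty.mp h] using (hsupp 1).symm
    exact zero_ne_one (h0.symm.trans hsum)
  obtain ⟨i, hi, hle⟩ := exists_le_of_sum_le hne (f := fun j ↦ w j * c) (g := fun j ↦ w j * f j)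
    (by rw [hsupp, hsupp, ← sum_mul, hsum, one_mul])
  have hwi : w i ≠ 0 := (mem_filter.mp hi).2
  exact ⟨i, hwi, le_of_mul_le_mul_left hle ((hw i).lt_of_ne' hwi)⟩

theorem card_filter_ne_zero_eq_sum {ι R : Type*} [Fintype ι] [Semiring R] [DecidableEq R]
    {z : ι → R} (hz : ∀ i, z i = 0 ∨ z i = 1) : ((univ.filter (z · ≠ 0)).card : R) = ∑ i, z i := by
  rw [card_eq_sum_ones, Nat.cast_sum, sum_filter]
  refine sum_congr rfl fun i _ ↦ ?_
  rcases hz i with h | h <;> simp [h, eq_comm]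

theorem Matrix.apply_eq_zero_of_mulVec_eq_smul {n K : Type*} [Fintype n] [Field K]
    {A : Matrix n n K} {v : n → K} {c : K} (hv : A *ᵥ v = c • v) (hc : c ≠ 0) {j : n}
    (hrow : ∀ b, A j b = 0) : v j = 0 := by
  have : c * v j = 0 := by
    rw [← smul_eq_mul, ← Pi.smul_apply, ← hv]
    simp [mulVec, dotProduct, hrow]
  exact (mul_eq_zero.mp this).resolve_left hc

namespace Matrix.IsHermitian

variable {n : Type*} [Fintype n] [DecidableEq n]

theorem apply_eq_sum_eigenvalues_mul_s2 {𝕜 : Type*} [RCLike 𝕜] {A : Matrix n n 𝕜}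
    (hA : A.IsHermitian) (a b : n) :
    A a b = ∑ i, (hA.eigenvalues i : 𝕜) *
      (hA.eigenvectorBasis i a * star (hA.eigenvectorBasis i b)) := by
  conv_lhs => rw [hA.spectral_theorem, Unitary.conjStarAlgAut_apply, mul_apply]
  refine sum_congr rfl fun i _ ↦ ?_
  simp only [mul_diagonal, star_apply, eigenvectorUnitary_apply, Function.comp_apply]
  ring

theorem sum_eigenvectorBasis_sq {A : Matrix n n ℝ} (hA : A.IsHermitian) (i : n) :
    ∑ a, hA.eigenvectorBasis i a ^ 2 = 1 := by
  have h := hA.eigenvectorBasis.orthonormal.1 i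
  rw [EuclideanSpace.norm_eq, Real.sqrt_eq_one] at h
  simpa using h

theorem sum_mul_apply_eq_sum_eigenvalues_mul_s2 {A : Matrix n n ℝ} (hA : A.IsHermitian)
    (S : Matrix n n ℝ) :
    ∑ a, ∑ b, S a b * A a b = ∑ i, hA.eigenvalues i *
      ∑ a, ∑ b, hA.eigenvectorBasis i a * S a b * hA.eigenvectorBasis i b := by
  simp only [hA.apply_eq_sum_eigenvalues_mul_s2, star_trivial, RCLike.ofReal_real_eq_id, id_eq,
    mul_sum]
  conv_lhs => enter [2, a]; rw [sum_comm]
  rw [sum_comm]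
  exact sum_congr rfl fun i _ ↦ sum_congr rfl fun a _ ↦ sum_congr rfl fun b _ ↦ by ring

end Matrix.IsHermitian

theorem Matrix.PosSemidef.exists_eigenvector_sum_mul_apply_le {n : Type*} [Fintype n]
    [DecidableEq n] {A : Matrix n n ℝ} (hA : A.PosSemidef) (htr : A.trace = 1)
    (S : Matrix n n ℝ) :
    ∃ i, hA.1.eigenvalues i ≠ 0 ∧ ∑ a, ∑ b, S a b * A a b ≤
      ∑ a, ∑ b, hA.1.eigenvectorBasis i a * S a b * hA.1.eigenvectorBasis i b := by
  have hsum : ∑ i, hA.1.eigenvalues i = 1 := by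
    simpa [hA.1.trace_eq_sum_eigenvalues] using htr
  rw [hA.1.sum_mul_apply_eq_sum_eigenvalues_mul_s2]
  exact exists_ne_zero_and_weighted_sum_le _ _ hA.eigenvalues_nonneg hsum

theorem misdo_to_sparse_feasible_general (p k : ℕ)
    (S : Matrix (Fin p) (Fin p) ℝ)
    (X : Matrix (Fin p) (Fin p) ℝ) (hX : X.PosSemidef) (htr : X.trace = 1)
    (z : Fin p → ℝ) (hzbin : ∀ i, z i = 0 ∨ z i = 1)
    (hzk : (∑ i, z i) ≤ (k : ℝ))
    (hsupp : ∀ i j, z i = 0 → X i j = 0) :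
    ∃ x : Fin p → ℝ, (∑ i, x i ^ 2) = 1 ∧
      (Finset.univ.filter (fun i => x i ≠ 0)).card ≤ k ∧
      (∑ i, ∑ j, x i * S i j * x j) ≥ ∑ i, ∑ j, S i j * X i j := by
  obtain ⟨i, hi, hle⟩ := hX.exists_eigenvector_sum_mul_apply_le htr S
  set v := hX.1.eigenvectorBasis i
  refine ⟨v, hX.1.sum_eigenvectorBasis_sq i, ?_, hle⟩
  have hsub : univ.filter (v · ≠ 0) ⊆ univ.filter (z · ≠ 0) := by
    intro a
    simp only [mem_filter, mem_univ, true_and]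
    exact mt fun hza ↦ apply_eq_zero_of_mulVec_eq_smul (hX.1.mulVec_eigenvectorBasis i) hi
      (hsupp a · hza)
  have hz : ((univ.filter (z · ≠ 0)).card : ℝ) ≤ k :=
    (card_filter_ne_zero_eq_sum hzbin).le.trans hzk
  exact (card_le_card hsub).trans (mod_cast hz)

/-- From a feasible solution of the MISDO reformulation one can extract a
feasible solution of sparse PCA with at least the same objective value. -/
theorem misdo_to_sparse_feasible (p k : ℕ) (hk1 : 1 ≤ k) (hkp : k ≤ p)
    (S : Matrix (Fin p) (Fin p) ℝ) (hS : S.IsHermitian)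
    (X : Matrix (Fin p) (Fin p) ℝ) (hX : X.PosSemidef) (htr : X.trace = 1)
    (z : Fin p → ℝ) (hzbin : ∀ i, z i = 0 ∨ z i = 1)
    (hzk : (∑ i, z i) ≤ (k : ℝ))
    (hsupp : ∀ i j, z i = 0 → X i j = 0) :
    ∃ x : Fin p → ℝ, (∑ i, x i ^ 2) = 1 ∧
      (Finset.univ.filter (fun i => x i ≠ 0)).card ≤ k ∧
      (∑ i, ∑ j, x i * S i j * x j) ≥ ∑ i, ∑ j, S i j * X i j :=
  misdo_to_sparse_feasible_general p k S X hX htr z hzbin hzk hsupp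
end

section
/- (Weak duality for the sparse PCA subproblem.) Let z ∈ [0,1]^p. Let X ∈ ℝ^{p×p} satisfy X ⪰ 0, tr(X) = 1, |X_{i,j}| ≤ M_{i,j} z_i for all i,j ∈ [p], and ∑_{j=1}^p |X_{i,j}| ≤ √k · z_i for all i ∈ [p]. Let λ ∈ ℝ, let α ∈ ℝ^{p×p} be symmetric with λI + α − Σ ⪰ 0, and let β ∈ ℝ^p with β_i ≥ 0 for all i. Then ⟨Σ, X⟩ ≤ λ + ∑_{i=1}^p z_i ( ∑_{j=1}^p M_{i,j} · max(0, |α_{i,j}| − β_i) + √k · β_i ). -/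
open Matrix
open scoped MatrixOrder ComplexOrder

/-!
Pairing the dual certificate with `X` gives `0 ≤ ⟨λI + α - Σ, X⟩ = λ + ⟨α, X⟩ - ⟨Σ, X⟩`, since the
trace of a product of positive semidefinite matrices is nonnegative. Row by row, `⟨α, X⟩` is then
bounded by splitting `|α_ij| = (|α_ij| - β_i) + β_i`: the first part is paid for by the entrywise
bound `|X_ij| ≤ M_ij z_i`, the second by the row bound `∑_j |X_ij| ≤ √k z_i`.
-/

theorem mul_le_max_abs_sub_mul_add_mul_abs {a x m b : ℝ} (hx : |x| ≤ m) :
    a * x ≤ max 0 (|a| - b) * m + b * |x| :=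
  calc a * x ≤ |a| * |x| := (le_abs_self _).trans (abs_mul a x).le
    _ = (|a| - b) * |x| + b * |x| := by ring
    _ ≤ max 0 (|a| - b) * m + b * |x| := by
      gcongr ?_ + _
      exact (mul_le_mul_of_nonneg_right (le_max_right _ _) (abs_nonneg x)).trans
        (mul_le_mul_of_nonneg_left hx (le_max_left _ _))

theorem sum_mul_le_of_abs_le {ι : Type*} [Fintype ι] {a x w : ι → ℝ} {c s b : ℝ}
    (hx : ∀ j, |x j| ≤ w j * c) (hsum : ∑ j, |x j| ≤ s * c) (hb : 0 ≤ b) :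
    ∑ j, a j * x j ≤ c * (∑ j, w j * max 0 (|a j| - b) + s * b) :=
  calc ∑ j, a j * x j ≤ ∑ j, (max 0 (|a j| - b) * (w j * c) + b * |x j|) :=
        Finset.sum_le_sum fun j _ => mul_le_max_abs_sub_mul_add_mul_abs (hx j)
    _ = c * ∑ j, w j * max 0 (|a j| - b) + b * ∑ j, |x j| := by
        simp only [Finset.sum_add_distrib, Finset.mul_sum]
        congr 1
        exact Finset.sum_congr rfl fun j _ => by ring
    _ ≤ c * ∑ j, w j * max 0 (|a j| - b) + b * (s * c) := by gcongr
    _ = c * (∑ j, w j * max 0 (|a j| - b) + s * b) := by ring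

namespace Matrix

theorem PosSemidef.trace_mul_nonneg {n 𝕜 : Type*} [Fintype n] [RCLike 𝕜]
    {A B : Matrix n n 𝕜} (hA : A.PosSemidef) (hB : B.PosSemidef) : 0 ≤ (A * B).trace := by
  classical
  obtain ⟨C, rfl⟩ := CStarAlgebra.nonneg_iff_eq_star_mul_self.mp hB.nonneg
  rw [← mul_assoc, trace_mul_comm, ← mul_assoc, star_eq_conjTranspose]
  exact (hA.mul_mul_conjTranspose_same C).trace_nonneg

theorem sum_sum_mul_eq_trace_mul_transpose {n R : Type*} [Fintype n] [CommSemiring R]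
    (A B : Matrix n n R) : ∑ i, ∑ j, A i j * B i j = (A * Bᵀ).trace := by
  simp [trace, mul_apply]

theorem PosSemidef.trace_mul_le_add_trace_mul {n : Type*} [Fintype n] [DecidableEq n]
    {X S a : Matrix n n ℝ} {l : ℝ} (hX : X.PosSemidef) (htr : X.trace = 1)
    (hfeas : (l • (1 : Matrix n n ℝ) + a - S).PosSemidef) :
    (S * X).trace ≤ l + (a * X).trace := by
  have := hfeas.trace_mul_nonneg hX
  rw [sub_mul, add_mul, smul_mul, one_mul, trace_sub, trace_add, trace_smul, htr, smul_eq_mul,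
    mul_one] at this
  linarith

end Matrix

theorem sparsePCA_subproblem_weak_duality_general (p k : ℕ)
    (S : Matrix (Fin p) (Fin p) ℝ)
    (z : Fin p → ℝ)
    (X : Matrix (Fin p) (Fin p) ℝ) (hX : X.PosSemidef) (htr : X.trace = 1)
    (hM : ∀ i j, |X i j| ≤ (if i = j then (1 : ℝ) else 1 / 2) * z i)
    (hrow : ∀ i, ∑ j, |X i j| ≤ Real.sqrt k * z i)
    (l : ℝ) (a : Matrix (Fin p) (Fin p) ℝ)
    (hfeas : (l • (1 : Matrix (Fin p) (Fin p) ℝ) + a - S).PosSemidef)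
    (b : Fin p → ℝ) (hb : ∀ i, 0 ≤ b i) :
    ∑ i, ∑ j, S i j * X i j ≤
      l + ∑ i, z i * ((∑ j, (if i = j then (1 : ℝ) else 1 / 2) * max 0 (|a i j| - b i))
            + Real.sqrt k * b i) := by
  have hXt : Xᵀ = X := by simpa using hX.isHermitian.eq
  calc ∑ i, ∑ j, S i j * X i j = (S * X).trace := by
        rw [sum_sum_mul_eq_trace_mul_transpose, hXt]
    _ ≤ l + (a * X).trace := hX.trace_mul_le_add_trace_mul htr hfeas
    _ = l + ∑ i, ∑ j, a i j * X i j := by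
        rw [sum_sum_mul_eq_trace_mul_transpose, hXt]
    _ ≤ _ := by
        gcongr with i
        exact sum_mul_le_of_abs_le (hM i) (hrow i) (hb i)

/-- Weak duality for the sparse PCA subproblem. -/
theorem sparsePCA_subproblem_weak_duality (p k : ℕ) (hk1 : 1 ≤ k) (hkp : k ≤ p)
    (S : Matrix (Fin p) (Fin p) ℝ) (hS : S.IsHermitian)
    (z : Fin p → ℝ) (hz01 : ∀ i, 0 ≤ z i ∧ z i ≤ 1)
    (X : Matrix (Fin p) (Fin p) ℝ) (hX : X.PosSemidef) (htr : X.trace = 1)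
    (hM : ∀ i j, |X i j| ≤ (if i = j then (1 : ℝ) else 1 / 2) * z i)
    (hrow : ∀ i, ∑ j, |X i j| ≤ Real.sqrt k * z i)
    (l : ℝ) (a : Matrix (Fin p) (Fin p) ℝ) (ha : aᵀ = a)
    (hfeas : (l • (1 : Matrix (Fin p) (Fin p) ℝ) + a - S).PosSemidef)
    (b : Fin p → ℝ) (hb : ∀ i, 0 ≤ b i) :
    ∑ i, ∑ j, S i j * X i j ≤
      l + ∑ i, z i * ((∑ j, (if i = j then (1 : ℝ) else 1 / 2) * max 0 (|a i j| - b i))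
            + Real.sqrt k * b i) :=
  sparsePCA_subproblem_weak_duality_general p k S z X hX htr hM hrow l a hfeas b hb
end

section
/- Let Σ be a real symmetric positive semidefinite matrix written in block form Σ = [[Σ₁₁, Σ₁₂], [Σ₁₂ᵀ, Σ₂₂]] with Σ₁₁ of size q×q and Σ₂₂ of size (p−q)×(p−q). Let λ = λ_max(Σ₁₁), and suppose that (I − (λI − Σ₁₁)(λI − Σ₁₁)†) Σ₁₂ = 0, where (·)† denotes the Moore–Penrose pseudoinverse. Define α̂₂₂ = Σ₂₂ − λI + Σ₁₂ᵀ (λI − Σ₁₁)† Σ₁₂ and α̂ = [[0, 0], [0, α̂₂₂]]. Then λI + α̂ − Σ ⪰ 0; that is, the pair (λ, α̂) is dual feasible for the sparse PCA separation problem. -/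
/-!
Writing `N = λI - Σ₁₁`, the matrix `λI + α̂ - Σ` is `[[N, -Σ₁₂], [-Σ₁₂ᵀ, Σ₁₂ᵀ N† Σ₁₂]]`.
Here `N ⪰ 0` because `λ` dominates every eigenvalue of `Σ₁₁`, and the range condition
`N N† Σ₁₂ = Σ₁₂` exhibits this block matrix as the congruence `Mᴴ N M` with `M = [I, -N† Σ₁₂]`.
-/

open Matrix
open scoped MatrixOrder ComplexOrder

namespace Matrix

variable {n m : Type*} [Fintype n] [DecidableEq n]

theorem IsHermitian.posSemidef_smul_one_sub {𝕜 : Type*} [RCLike 𝕜] {A : Matrix n n 𝕜}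
    (hA : A.IsHermitian) {l : ℝ} (hl : ∀ i, hA.eigenvalues i ≤ l) :
    (l • (1 : Matrix n n 𝕜) - A).PosSemidef := by
  rw [← Matrix.le_iff, ← Algebra.algebraMap_eq_smul_one]
  refine le_algebraMap_of_spectrum_le (fun x hx => ?_) hA.isSelfAdjoint
  rw [hA.spectrum_real_eq_range_eigenvalues] at hx
  obtain ⟨i, rfl⟩ := hx
  exact hl i

variable {R : Type*} [Ring R] [PartialOrder R] [StarRing R] [Fintype m]

theorem PosSemidef.fromBlocks_mul_mul {N : Matrix n n R} (hN : N.PosSemidef) (X : Matrix n m R) :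
    (fromBlocks N (N * X) (Xᴴ * N) (Xᴴ * N * X)).PosSemidef := by
  have h := hN.conjTranspose_mul_mul_same (fromCols (1 : Matrix n n R) X)
  rw [conjTranspose_fromCols_eq_fromRows_conjTranspose, fromRows_mul, fromRows_mul_fromCols]
    at h
  simpa only [conjTranspose_one, Matrix.one_mul, Matrix.mul_one] using h

theorem PosSemidef.fromBlocks_neg_of_mul_mul_eq {N P : Matrix n n R} {B : Matrix n m R}
    (hN : N.PosSemidef) (hB : N * P * B = B) :
    (fromBlocks N (-B) (-Bᴴ) (Bᴴ * P * B)).PosSemidef := by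
  have hBH : Bᴴ * Pᴴ * N = Bᴴ := by
    simpa only [conjTranspose_mul, hN.isHermitian.eq, Matrix.mul_assoc] using congrArg (·ᴴ) hB
  have h := hN.fromBlocks_mul_mul (-(P * B))
  rwa [Matrix.mul_neg, ← Matrix.mul_assoc, hB, conjTranspose_neg, conjTranspose_mul,
    Matrix.neg_mul, hBH, Matrix.neg_mul, Matrix.mul_neg, neg_neg, ← Matrix.mul_assoc] at h

end Matrix

theorem dual_feasibility_schur_complement_general (q r : ℕ)
    (A : Matrix (Fin q) (Fin q) ℝ) (B : Matrix (Fin q) (Fin r) ℝ)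
    (C : Matrix (Fin r) (Fin r) ℝ)
    (hA : A.IsHermitian)
    (l : ℝ) (hl : l = ⨆ i, hA.eigenvalues i)
    (N : Matrix (Fin q) (Fin q) ℝ) (hN : N = l • (1 : Matrix (Fin q) (Fin q) ℝ) - A)
    (P : Matrix (Fin q) (Fin q) ℝ)
    (hB : ((1 : Matrix (Fin q) (Fin q) ℝ) - N * P) * B = 0) :
    (l • (1 : Matrix (Fin q ⊕ Fin r) (Fin q ⊕ Fin r) ℝ)
      + Matrix.fromBlocks 0 0 0 (C - l • (1 : Matrix (Fin r) (Fin r) ℝ) + Bᵀ * P * B)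
      - Matrix.fromBlocks A B Bᵀ C).PosSemidef := by
  have hNpsd : N.PosSemidef := hN ▸ hA.posSemidef_smul_one_sub fun i =>
    hl ▸ le_ciSup (Set.finite_range _).bddAbove i
  have hNPB : N * P * B = B := by
    rwa [Matrix.sub_mul, Matrix.one_mul, sub_eq_zero, eq_comm] at hB
  have hblocks : l • (1 : Matrix (Fin q ⊕ Fin r) (Fin q ⊕ Fin r) ℝ)
      + fromBlocks 0 0 0 (C - l • 1 + Bᵀ * P * B) - fromBlocks A B Bᵀ C
      = fromBlocks N (-B) (-Bᴴ) (Bᴴ * P * B) := by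
    rw [← fromBlocks_one, fromBlocks_smul, fromBlocks_add, sub_eq_add_neg, fromBlocks_neg, fromBlocks_add, hN,
      conjTranspose_eq_transpose_of_trivial]
    congr 1 <;> module
  exact hblocks ▸ hNpsd.fromBlocks_neg_of_mul_mul_eq hNPB

/-- Dual feasibility of the explicit dual solution built from the leading
eigenvalue of the top-left block and a Schur-complement correction, where the
Moore–Penrose pseudoinverse is characterized by the four Penrose conditions. -/
theorem dual_feasibility_schur_complement (q r : ℕ) (hq : 0 < q)
    (A : Matrix (Fin q) (Fin q) ℝ) (B : Matrix (Fin q) (Fin r) ℝ)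
    (C : Matrix (Fin r) (Fin r) ℝ)
    (hPSD : (Matrix.fromBlocks A B Bᵀ C).PosSemidef)
    (hA : A.IsHermitian)
    (l : ℝ) (hl : l = ⨆ i, hA.eigenvalues i)
    (N : Matrix (Fin q) (Fin q) ℝ) (hN : N = l • (1 : Matrix (Fin q) (Fin q) ℝ) - A)
    (P : Matrix (Fin q) (Fin q) ℝ)
    (hP1 : N * P * N = N) (hP2 : P * N * P = P)
    (hP3 : (N * P)ᵀ = N * P) (hP4 : (P * N)ᵀ = P * N)
    (hB : ((1 : Matrix (Fin q) (Fin q) ℝ) - N * P) * B = 0) :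
    (l • (1 : Matrix (Fin q ⊕ Fin r) (Fin q ⊕ Fin r) ℝ)
      + Matrix.fromBlocks 0 0 0 (C - l • (1 : Matrix (Fin r) (Fin r) ℝ) + Bᵀ * P * B)
      - Matrix.fromBlocks A B Bᵀ C).PosSemidef :=
  dual_feasibility_schur_complement_general q r A B C hA l hl N hN P hB
end

section
/- (Approximation quality of the Gershgorin bound for scaled diagonally dominant matrices.) Let Σ be a p×p real symmetric positive semidefinite matrix and suppose there exists d ∈ ℝ^p with d_i > 0 for all i such that d_i Σ_{i,i} ≥ ∑_{j ≠ i} d_j |Σ_{i,j}| for every i ∈ [p]. Let ρ = max_{i,j ∈ [p]} d_i / d_j. Then for every nonempty S ⊆ [p], letting f(S) denote the largest eigenvalue of the principal submatrix of Σ indexed by S, one has f(S) ≤ max_{j ∈ S} ∑_{i ∈ S} |Σ_{i,j}| ≤ (1 + ρ) · f(S). -/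
/-!
The Rayleigh values `xᵀ A x` of a symmetric `A` over unit vectors supported in `T` are bounded by
the largest absolute column sum on `T`: termwise `x i * A i j * x j ≤ |A i j| (x i² + x j²) / 2`,
and symmetry turns both halves into column sums. Conversely each diagonal entry `A j j`, `j ∈ T`,
is a Rayleigh value, and scaled diagonal dominance together with `d j ≤ ρ d i` bounds the
off-diagonal part of row `j` by `ρ A j j`, so every column sum on `T` is at most `(1 + ρ) A j j`.
-/

open Finset

theorem mul_mul_le_abs_mul_add_sq (a x y : ℝ) : x * a * y ≤ |a| * (x ^ 2 + y ^ 2) / 2 := by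
  have : x * y ≤ (x ^ 2 + y ^ 2) / 2 := by nlinarith [sq_nonneg (x - y)]
  have : -(x * y) ≤ (x ^ 2 + y ^ 2) / 2 := by nlinarith [sq_nonneg (x + y)]
  rcases abs_cases a with ⟨ha, _⟩ | ⟨ha, _⟩ <;> rw [ha] <;> nlinarith

namespace Matrix

variable {ι : Type*}

/-- `sSup (A.rayleighValuesOn T)` is the largest eigenvalue of the principal submatrix of `A`
on `T`. -/
def rayleighValuesOn [Fintype ι] (A : Matrix ι ι ℝ) (T : Finset ι) : Set ℝ :=
  {v | ∃ x : ι → ℝ, (∑ i, x i ^ 2) = 1 ∧ (∀ i ∉ T, x i = 0) ∧ v = ∑ i, ∑ j, x i * A i j * x j}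

theorem diag_mem_rayleighValuesOn [Fintype ι] [DecidableEq ι] (A : Matrix ι ι ℝ)
    {T : Finset ι} {j : ι} (hj : j ∈ T) : A j j ∈ A.rayleighValuesOn T := by
  refine ⟨Pi.single j 1, by simp [Pi.single_apply], fun i hi => ?_, by simp [Pi.single_apply]⟩
  exact Pi.single_eq_of_ne (ne_of_mem_of_not_mem hj hi).symm _

theorem IsSymm.sum_mul_mul_le_sup'_mul {A : Matrix ι ι ℝ} (hA : A.IsSymm) (T : Finset ι)
    (hT : T.Nonempty) (x : ι → ℝ) :
    ∑ i ∈ T, ∑ j ∈ T, x i * A i j * x j ≤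
      T.sup' hT (fun j => ∑ i ∈ T, |A i j|) * ∑ j ∈ T, x j ^ 2 := by
  have hswap : ∑ i ∈ T, ∑ j ∈ T, |A i j| * x i ^ 2 = ∑ i ∈ T, ∑ j ∈ T, |A i j| * x j ^ 2 := by
    rw [sum_comm]
    exact sum_congr rfl fun i _ => sum_congr rfl fun j _ => by rw [hA.apply]
  calc ∑ i ∈ T, ∑ j ∈ T, x i * A i j * x j
      ≤ ∑ i ∈ T, ∑ j ∈ T, |A i j| * (x i ^ 2 + x j ^ 2) / 2 := by
        gcongr with i _ j _; exact mul_mul_le_abs_mul_add_sq _ _ _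
    _ = ∑ i ∈ T, ∑ j ∈ T, |A i j| * x j ^ 2 := by
        simp only [mul_add, add_div, sum_add_distrib, ← sum_div, hswap]; ring
    _ = ∑ j ∈ T, x j ^ 2 * ∑ i ∈ T, |A i j| := by
        rw [sum_comm]; simp only [mul_sum, mul_comm]
    _ ≤ ∑ j ∈ T, x j ^ 2 * T.sup' hT (fun j => ∑ i ∈ T, |A i j|) := by
        gcongr with j hj; exact le_sup' (fun j => ∑ i ∈ T, |A i j|) hj
    _ = _ := by rw [← sum_mul, mul_comm]

theorem IsSymm.le_sup'_of_mem_rayleighValuesOn [Fintype ι] {A : Matrix ι ι ℝ} (hA : A.IsSymm)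
    {T : Finset ι} (hT : T.Nonempty) {v : ℝ} (hv : v ∈ A.rayleighValuesOn T) :
    v ≤ T.sup' hT (fun j => ∑ i ∈ T, |A i j|) := by
  obtain ⟨x, hx, hxT, rfl⟩ := hv
  have hsub (f : ι → ℝ) (hf : ∀ i ∉ T, f i = 0) : ∑ i ∈ T, f i = ∑ i, f i :=
    sum_subset (subset_univ T) fun i _ hi => hf i hi
  have hq : ∑ i, ∑ j, x i * A i j * x j = ∑ i ∈ T, ∑ j ∈ T, x i * A i j * x j := by
    rw [← hsub _ fun i hi => by simp [hxT i hi]]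
    exact sum_congr rfl fun i _ => (hsub _ fun j hj => by simp [hxT j hj]).symm
  rw [← hsub _ fun i hi => by simp [hxT i hi]] at hx
  simpa [hq, hx] using hA.sum_mul_mul_le_sup'_mul T hT x

theorem sum_erase_abs_le_mul_diag [Fintype ι] [DecidableEq ι] {A : Matrix ι ι ℝ} {d : ι → ℝ}
    (hd : ∀ i, 0 < d i) (hdd : ∀ i, ∑ j ∈ univ.erase i, d j * |A i j| ≤ d i * A i i)
    {r : ℝ} (hr : ∀ i j, d i / d j ≤ r) (j : ι) :
    ∑ i ∈ univ.erase j, |A j i| ≤ r * A j j := by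
  have hr0 : 0 ≤ r := (div_pos (hd j) (hd j)).le.trans (hr j j)
  suffices d j * ∑ i ∈ univ.erase j, |A j i| ≤ d j * (r * A j j) from
    le_of_mul_le_mul_left this (hd j)
  calc d j * ∑ i ∈ univ.erase j, |A j i|
      ≤ ∑ i ∈ univ.erase j, r * (d i * |A j i|) := by
        rw [mul_sum]
        refine sum_le_sum fun i _ => ?_
        rw [← mul_assoc]
        exact mul_le_mul_of_nonneg_right ((div_le_iff₀ (hd i)).mp (hr j i)) (abs_nonneg _)
    _ ≤ r * (d j * A j j) := by rw [← mul_sum]; exact mul_le_mul_of_nonneg_left (hdd j) hr0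
    _ = d j * (r * A j j) := by ring

theorem sum_abs_le_one_add_mul_diag [Fintype ι] [DecidableEq ι] {A : Matrix ι ι ℝ} {d : ι → ℝ}
    (hd : ∀ i, 0 < d i) (hdd : ∀ i, ∑ j ∈ univ.erase i, d j * |A i j| ≤ d i * A i i)
    {r : ℝ} (hr : ∀ i j, d i / d j ≤ r) {T : Finset ι} {j : ι} (hj : j ∈ T) :
    ∑ i ∈ T, |A j i| ≤ (1 + r) * A j j := by
  have hoff : 0 ≤ ∑ i ∈ univ.erase j, d i * |A j i| :=
    sum_nonneg fun i _ => mul_nonneg (hd i).le (abs_nonneg _)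
  have hdiag : 0 ≤ A j j := nonneg_of_mul_nonneg_right (hoff.trans (hdd j)) (hd j)
  calc ∑ i ∈ T, |A j i| = |A j j| + ∑ i ∈ T.erase j, |A j i| := (add_sum_erase T _ hj).symm
    _ ≤ A j j + ∑ i ∈ univ.erase j, |A j i| := by
        rw [abs_of_nonneg hdiag]
        gcongr
        exact subset_univ T
    _ ≤ (1 + r) * A j j := by linarith [sum_erase_abs_le_mul_diag hd hdd hr j]

end Matrix

theorem le_ciSup_ciSup {ι κ : Type*} [Finite ι] [Finite κ] (f : ι → κ → ℝ) (i : ι) (j : κ) :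
    f i j ≤ ⨆ i, ⨆ j, f i j :=
  le_ciSup_of_le (Finite.bddAbove_range _) i (le_ciSup (Finite.bddAbove_range _) j)

open Matrix in
/-- For a scaled diagonally dominant PSD matrix, the Gershgorin circle bound
is a (1+ρ)-factor approximation of the largest eigenvalue of any principal submatrix
(expressed as the maximal Rayleigh quotient over unit vectors supported in S). -/
theorem gershgorin_approximation_sdd (p : ℕ) (S : Matrix (Fin p) (Fin p) ℝ)
    (hS : S.PosSemidef)
    (d : Fin p → ℝ) (hd : ∀ i, 0 < d i)
    (hdd : ∀ i, (∑ j ∈ Finset.univ.erase i, d j * |S i j|) ≤ d i * S i i)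
    (rho : ℝ) (hrho : rho = ⨆ i, ⨆ j, d i / d j)
    (T : Finset (Fin p)) (hT : T.Nonempty)
    (fS : ℝ)
    (hfS : fS = sSup {v : ℝ | ∃ x : Fin p → ℝ, (∑ i, x i ^ 2) = 1 ∧
        (∀ i ∉ T, x i = 0) ∧ v = ∑ i, ∑ j, x i * S i j * x j}) :
    fS ≤ T.sup' hT (fun j => ∑ i ∈ T, |S i j|) ∧
    T.sup' hT (fun j => ∑ i ∈ T, |S i j|) ≤ (1 + rho) * fS := by
  have hsymm : S.IsSymm := isHermitian_iff_isSymm.mp hS.isHermitian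
  have hfS' : fS = sSup (S.rayleighValuesOn T) := hfS
  have ⟨j₀, hj₀⟩ := hT
  have hle_sup' (v) (hv : v ∈ S.rayleighValuesOn T) : v ≤ T.sup' hT (fun j => ∑ i ∈ T, |S i j|) :=
    hsymm.le_sup'_of_mem_rayleighValuesOn hT hv
  have hdiag_le (j) (hj : j ∈ T) : S j j ≤ fS :=
    hfS' ▸ le_csSup ⟨_, hle_sup'⟩ (S.diag_mem_rayleighValuesOn hj)
  have hr (i j) : d i / d j ≤ rho := hrho ▸ le_ciSup_ciSup (fun i j => d i / d j) i j
  have hrho_nonneg : 0 ≤ rho := (div_pos (hd j₀) (hd j₀)).le.trans (hr j₀ j₀)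
  refine ⟨hfS' ▸ csSup_le ⟨_, S.diag_mem_rayleighValuesOn hj₀⟩ hle_sup',
    sup'_le hT _ fun j hj => ?_⟩
  calc ∑ i ∈ T, |S i j| = ∑ i ∈ T, |S j i| := by simp only [hsymm.apply]
    _ ≤ (1 + rho) * S j j := sum_abs_le_one_add_mul_diag hd hdd hr hj
    _ ≤ (1 + rho) * fS := by gcongr; exact hdiag_le j hj
end

section
/- (Two-factor guarantee of the ovals-of-Cassini bound for doubly diagonally dominant matrices.) Let Σ be a p×p real symmetric positive semidefinite matrix satisfying Σ_{i,i} Σ_{j,j} ≥ R_i R_j for all i ≠ j, where R_i = ∑_{j ≠ i} |Σ_{i,j}|. Then for every S ⊆ [p] with |S| ≥ 2, letting f(S) denote the largest eigenvalue of the principal submatrix of Σ indexed by S and R_i(S) = ∑_{j ∈ S, j ≠ i} |Σ_{i,j}|, one has f(S) ≤ max_{i,j ∈ S, i ≠ j} [ (Σ_{i,i} + Σ_{j,j})/2 + (1/2)·√( (Σ_{i,i} − Σ_{j,j})² + 4 R_i(S) R_j(S) ) ] ≤ 2 f(S). -/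
/-!
Brauer's ovals of Cassini: if `A v = μ v` with `v ≠ 0`, let `|v i|` be the largest entry and
`|v j|` the largest among the others. Rows `i` and `j` of the eigen-equation give
`|μ - A i i| |v i| ≤ R_i |v j|` and `|μ - A j j| |v j| ≤ R_j |v i|`, and their product puts `μ` in
the oval `|μ - A i i| |μ - A j j| ≤ R_i R_j`, whose largest real point is the Cassini value of
`(i, j)`. Applied to the top eigenvalue of the principal submatrix on `S` this bounds every
Rayleigh quotient supported on `S`. Conversely, double diagonal dominance gives
`R_i(S) R_j(S) ≤ Σ_ii Σ_jj`, so each Cassini value is at most `Σ_ii + Σ_jj ≤ 2 f(S)`.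
-/

open Finset Matrix

/-- The largest real point of the Cassini oval `|μ - a| |μ - b| ≤ r s`. -/
noncomputable def cassiniBound (a b r s : ℝ) : ℝ :=
  (a + b) / 2 + √((a - b) ^ 2 + 4 * r * s) / 2

section CassiniBound

variable {μ a b r s : ℝ}

theorem le_cassiniBound_of_abs_sub_mul_abs_sub_le (h : |μ - a| * |μ - b| ≤ r * s) :
    μ ≤ cassiniBound a b r s := by
  have hrs : 0 ≤ r * s := (mul_nonneg (abs_nonneg _) (abs_nonneg _)).trans h
  set d := √((a - b) ^ 2 + 4 * r * s)
  have hd : d ^ 2 = (a - b) ^ 2 + 4 * r * s := Real.sq_sqrt (by nlinarith [sq_nonneg (a - b)])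
  have hab : |a - b| ≤ d := Real.abs_le_sqrt (by nlinarith)
  by_contra! hμ
  rw [cassiniBound] at hμ
  obtain ⟨h₁, h₂⟩ := abs_le.mp hab
  rw [abs_of_pos (by linarith), abs_of_pos (by linarith)] at h
  nlinarith [mul_pos (show 0 < 2 * μ - a - b - d by linarith)
    (show 0 < 2 * μ - a - b + d by linarith)]

theorem cassiniBound_le_add (hab : 0 ≤ a + b) (h : r * s ≤ a * b) :
    cassiniBound a b r s ≤ a + b := by
  have : √((a - b) ^ 2 + 4 * r * s) ≤ a + b := Real.sqrt_le_iff.mpr ⟨hab, by nlinarith⟩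
  rw [cassiniBound]
  linarith

end CassiniBound

theorem Finset.sum_coe_sort_eq_sum_univ {α M : Type*} [Fintype α] [AddCommMonoid M] {T : Finset α}
    {f : α → M} (hf : ∀ i ∉ T, f i = 0) : ∑ t : T, f t = ∑ i, f i :=
  (sum_coe_sort T f).trans <| Fintype.sum_subset fun i hi => by_contra fun h => hi (hf i h)

namespace Matrix

theorem sum_sum_mul_mul_eq_dotProduct_submatrix_mulVec {α R : Type*} [Fintype α]
    [CommSemiring R] (A : Matrix α α R) {T : Finset α} {x : α → R} (hx : ∀ i ∉ T, x i = 0) :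
    ∑ i, ∑ j, x i * A i j * x j =
      (fun t : T => x t) ⬝ᵥ A.submatrix (↑) (↑) *ᵥ fun t : T => x t := by
  rw [← sum_coe_sort_eq_sum_univ fun i hi => by simp [hx i hi]]
  refine sum_congr rfl fun i _ => ?_
  rw [← sum_coe_sort_eq_sum_univ fun j hj => by simp [hx j hj], mulVec, dotProduct, mul_sum]
  exact sum_congr rfl fun j _ => mul_assoc ..

section Brauer

variable {K n : Type*} [NormedField K] [Fintype n] [DecidableEq n] {A : Matrix n n K} {μ : K}
  {v : n → K}

theorem norm_sub_diag_mul_norm_le_of_mulVec_eq_smul (hAv : A *ᵥ v = μ • v) (i : n) {c : ℝ}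
    (hc : ∀ t ∈ univ.erase i, ‖v t‖ ≤ c) :
    ‖μ - A i i‖ * ‖v i‖ ≤ (∑ t ∈ univ.erase i, ‖A i t‖) * c := by
  have hrow : (μ - A i i) * v i = ∑ t ∈ univ.erase i, A i t * v t := by
    rw [sum_erase_eq_sub (mem_univ i), ← dotProduct, ← mulVec, hAv]
    simp only [Pi.smul_apply, smul_eq_mul]
    ring
  calc ‖μ - A i i‖ * ‖v i‖ = ‖∑ t ∈ univ.erase i, A i t * v t‖ := by rw [← norm_mul, hrow]
    _ ≤ ∑ t ∈ univ.erase i, ‖A i t‖ * ‖v t‖ := by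
      simpa only [norm_mul] using norm_sum_le (univ.erase i) fun t => A i t * v t
    _ ≤ ∑ t ∈ univ.erase i, ‖A i t‖ * c := by gcongr with t ht; exact hc t ht
    _ = (∑ t ∈ univ.erase i, ‖A i t‖) * c := (sum_mul ..).symm

theorem exists_ne_norm_sub_mul_norm_sub_le_of_mulVec_eq_smul [Nontrivial n] (hv : v ≠ 0)
    (hAv : A *ᵥ v = μ • v) :
    ∃ i j, i ≠ j ∧ ‖μ - A i i‖ * ‖μ - A j j‖ ≤
      (∑ t ∈ univ.erase i, ‖A i t‖) * ∑ t ∈ univ.erase j, ‖A j t‖ := by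
  obtain ⟨i, -, hi⟩ := exists_max_image univ (‖v ·‖) univ_nonempty
  obtain ⟨j, hj, hj_max⟩ := exists_max_image (univ.erase i) (‖v ·‖) univ_nontrivial.erase_nonempty
  refine ⟨i, j, (ne_of_mem_erase hj).symm, ?_⟩
  have hvi : 0 < ‖v i‖ := by
    obtain ⟨t, ht⟩ := Function.ne_iff.mp hv
    exact (norm_pos_iff.mpr ht).trans_le (hi t (mem_univ t))
  have h₁ := norm_sub_diag_mul_norm_le_of_mulVec_eq_smul hAv i hj_max
  have h₂ := norm_sub_diag_mul_norm_le_of_mulVec_eq_smul hAv j fun t _ => hi t (mem_univ t)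
  rcases (norm_nonneg (v j)).eq_or_lt with hvj | hvj
  · have : ‖μ - A i i‖ = 0 := by
      rw [← hvj, mul_zero] at h₁
      nlinarith [norm_nonneg (μ - A i i)]
    rw [this, zero_mul]
    positivity
  · have := mul_le_mul h₁ h₂ (by positivity) (by positivity)
    nlinarith [mul_pos hvi hvj, norm_nonneg (μ - A i i), norm_nonneg (μ - A j j)]

end Brauer

section Real

variable {n : Type*} [Fintype n] [DecidableEq n] {A : Matrix n n ℝ}

open scoped MatrixOrder in
theorem IsHermitian.dotProduct_mulVec_le_of_eigenvalues_le (hA : A.IsHermitian) {c : ℝ}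
    (h : ∀ k, hA.eigenvalues k ≤ c) (y : n → ℝ) : y ⬝ᵥ A *ᵥ y ≤ c * (y ⬝ᵥ y) := by
  have hle : A ≤ algebraMap ℝ _ c := le_algebraMap_of_spectrum_le (by
    rw [hA.spectrum_real_eq_range_eigenvalues]; rintro _ ⟨k, rfl⟩; exact h k) hA
  have := (le_iff.mp hle).dotProduct_mulVec_nonneg y
  simp only [star_trivial, Algebra.algebraMap_eq_smul_one, sub_mulVec, smul_mulVec, one_mulVec,
    dotProduct_sub, dotProduct_smul, smul_eq_mul, sub_nonneg] at this
  exact this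

theorem IsHermitian.exists_eigenvalues_le_cassiniBound [Nontrivial n] (hA : A.IsHermitian)
    (k : n) : ∃ i j, i ≠ j ∧ hA.eigenvalues k ≤ cassiniBound (A i i) (A j j)
      (∑ t ∈ univ.erase i, |A i t|) (∑ t ∈ univ.erase j, |A j t|) := by
  have hv : (hA.eigenvectorBasis k : n → ℝ) ≠ 0 := fun h =>
    hA.eigenvectorBasis.orthonormal.ne_zero k (by ext t; exact congrFun h t)
  obtain ⟨i, j, hij, h⟩ :=
    exists_ne_norm_sub_mul_norm_sub_le_of_mulVec_eq_smul hv (hA.mulVec_eigenvectorBasis k)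
  simp only [Real.norm_eq_abs] at h
  exact ⟨i, j, hij, le_cassiniBound_of_abs_sub_mul_abs_sub_le h⟩

theorem IsHermitian.exists_quadForm_le_cassiniBound (hA : A.IsHermitian) {T : Finset n}
    (hT : 1 < #T) {x : n → ℝ} (hx1 : ∑ i, x i ^ 2 = 1) (hx0 : ∀ i ∉ T, x i = 0) :
    ∃ i ∈ T, ∃ j ∈ T, i ≠ j ∧ ∑ i, ∑ j, x i * A i j * x j ≤
      cassiniBound (A i i) (A j j) (∑ t ∈ T.erase i, |A i t|) (∑ t ∈ T.erase j, |A j t|) := by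
  set M := A.submatrix (Subtype.val : T → n) Subtype.val
  have hM : M.IsHermitian := hA.submatrix _
  have : Nontrivial T := (one_lt_card_iff_nontrivial.mp hT).coe_sort
  obtain ⟨k, hk⟩ := Finite.exists_max hM.eigenvalues
  obtain ⟨i, j, hij, hkij⟩ := hM.exists_eigenvalues_le_cassiniBound k
  refine ⟨i, i.2, j, j.2, Subtype.coe_ne_coe.mpr hij, ?_⟩
  have hy : (fun t : T => x t) ⬝ᵥ (fun t : T => x t) = 1 := by
    rw [← hx1, ← sum_coe_sort_eq_sum_univ (T := T) fun i hi => by simp [hx0 i hi]]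
    simp only [dotProduct, sq]
  rw [← sum_erase_attach, ← sum_erase_attach, ← univ_eq_attach]
  calc ∑ i, ∑ j, x i * A i j * x j = (fun t : T => x t) ⬝ᵥ M *ᵥ fun t : T => x t :=
        sum_sum_mul_mul_eq_dotProduct_submatrix_mulVec A hx0
    _ ≤ hM.eigenvalues k := by
        simpa only [hy, mul_one] using hM.dotProduct_mulVec_le_of_eigenvalues_le hk fun t : T => x t
    _ ≤ _ := hkij

theorem cassiniBound_le_diag_add_diag (hS : A.PosSemidef) (T : Finset n) {i j : n}
    (hdd : (∑ t ∈ univ.erase i, |A i t|) * (∑ t ∈ univ.erase j, |A j t|) ≤ A i i * A j j) :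
    cassiniBound (A i i) (A j j) (∑ t ∈ T.erase i, |A i t|) (∑ t ∈ T.erase j, |A j t|) ≤
      A i i + A j j :=
  cassiniBound_le_add (add_nonneg hS.diag_nonneg hS.diag_nonneg) <|
    le_trans (by gcongr <;> first | positivity | exact subset_univ T) hdd

end Real

end Matrix

/-- Two-factor guarantee of the ovals-of-Cassini bound for doubly
diagonally dominant PSD matrices, where the largest eigenvalue of the principal
submatrix indexed by S is expressed as the maximal Rayleigh quotient over unit
vectors supported in S. -/
theorem cassini_two_factor_ddd (p : ℕ) (S : Matrix (Fin p) (Fin p) ℝ)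
    (hS : S.PosSemidef)
    (hdd : ∀ i j, i ≠ j →
      (∑ t ∈ Finset.univ.erase i, |S i t|) * (∑ t ∈ Finset.univ.erase j, |S j t|) ≤
        S i i * S j j)
    (T : Finset (Fin p)) (hT : 2 ≤ T.card)
    (fS : ℝ)
    (hfS : fS = sSup {v : ℝ | ∃ x : Fin p → ℝ, (∑ i, x i ^ 2) = 1 ∧
        (∀ i ∉ T, x i = 0) ∧ v = ∑ i, ∑ j, x i * S i j * x j})
    (cassini : ℝ)
    (hcassini : cassini = sSup {v : ℝ | ∃ i ∈ T, ∃ j ∈ T, i ≠ j ∧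
        v = (S i i + S j j) / 2 +
          Real.sqrt ((S i i - S j j) ^ 2 +
            4 * (∑ t ∈ T.erase i, |S i t|) * (∑ t ∈ T.erase j, |S j t|)) / 2}) :
    fS ≤ cassini ∧ cassini ≤ 2 * fS := by
  set C := {v : ℝ | ∃ i ∈ T, ∃ j ∈ T, i ≠ j ∧
    v = (S i i + S j j) / 2 + Real.sqrt ((S i i - S j j) ^ 2 +
      4 * (∑ t ∈ T.erase i, |S i t|) * (∑ t ∈ T.erase j, |S j t|)) / 2}
  set F := {v : ℝ | ∃ x : Fin p → ℝ, (∑ i, x i ^ 2) = 1 ∧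
    (∀ i ∉ T, x i = 0) ∧ v = ∑ i, ∑ j, x i * S i j * x j}
  have hCbdd : BddAbove C := by
    refine ((Set.finite_range fun ij : Fin p × Fin p => cassiniBound (S ij.1 ij.1) (S ij.2 ij.2)
      (∑ t ∈ T.erase ij.1, |S ij.1 t|) (∑ t ∈ T.erase ij.2, |S ij.2 t|)).subset ?_).bddAbove
    rintro _ ⟨i, -, j, -, -, rfl⟩
    exact ⟨(i, j), rfl⟩
  have hF_le : ∀ v ∈ F, v ≤ cassini := by
    rintro _ ⟨x, hx1, hx0, rfl⟩
    obtain ⟨i, hi, j, hj, hij, hx⟩ := hS.isHermitian.exists_quadForm_le_cassiniBound hT hx1 hx0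
    exact hcassini ▸ hx.trans (le_csSup hCbdd ⟨i, hi, j, hj, hij, rfl⟩)
  have hdiag_mem : ∀ i ∈ T, S i i ∈ F := fun i hi =>
    ⟨Pi.single i 1, by simp [Pi.single_apply],
      fun t ht => Pi.single_eq_of_ne (ne_of_mem_of_not_mem hi ht).symm 1, by simp [Pi.single_apply]⟩
  have hdiag_le : ∀ i ∈ T, S i i ≤ fS := fun i hi =>
    hfS ▸ le_csSup ⟨cassini, hF_le⟩ (hdiag_mem i hi)
  obtain ⟨i₀, hi₀, j₀, hj₀, hij₀⟩ := one_lt_card.mp hT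
  refine ⟨hfS ▸ csSup_le ⟨_, hdiag_mem i₀ hi₀⟩ hF_le,
    hcassini ▸ csSup_le ⟨_, i₀, hi₀, j₀, hj₀, hij₀, rfl⟩ ?_⟩
  rintro _ ⟨i, hi, j, hj, hij, rfl⟩
  calc _ ≤ S i i + S j j := cassiniBound_le_diag_add_diag hS T (hdd i j hij)
    _ ≤ 2 * fS := by linarith [hdiag_le i hi, hdiag_le j hj]
end

section
/- (Sandwich property of the strengthened relaxation.) Let P_relax = sup { ⟨Σ, X⟩ : z ∈ [0,1]^p, ∑_i z_i ≤ k, X ⪰ 0, tr(X) = 1, |X_{i,j}| ≤ M_{i,j} z_i ∀ i,j }, let P_strong = sup { ⟨Σ, X⟩ : z ∈ [0,1]^p, ∑_i z_i ≤ k, X ⪰ 0, tr(X) = 1, |X_{i,j}| ≤ M_{i,j} z_i ∀ i,j, ∑_{j=1}^p X_{i,j}² ≤ X_{i,i} z_i ∀ i, and ∑_{i,j} |X_{i,j}| ≤ k }, and let P_bin = sup { ⟨Σ, X⟩ : z ∈ {0,1}^p, ∑_i z_i ≤ k, X ⪰ 0, tr(X) = 1, |X_{i,j}| ≤ M_{i,j}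 z_i ∀ i,j }. Then P_relax ≥ P_strong ≥ P_bin. -/
/-!
Each feasible set contains the next, so the suprema are ordered as soon as the relaxation is
bounded and the binary problem is feasible whenever the relaxation is; otherwise all three sets
are empty and every `sSup` is the junk value `0`. The strengthening cuts are valid for binary `z`
because the `2 × 2` minors of a PSD matrix give `X i j ^ 2 ≤ X i i * X j j`: a row of `X`
vanishes where `z i = 0`, its squares sum to at most `X i i * tr X`, and summing
`|X i j| ≤ (X i i + X j j) / 2` over the support of `z` gives at most `(∑ z) * tr X ≤ k`.
-/

open Finset Matrix

theorem Real.sSup_le_sSup_of_subset_chain {A B C : Set ℝ} (hA : BddAbove A) (hBA : B ⊆ A)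
    (hCB : C ⊆ B) (hne : A.Nonempty → C.Nonempty) : sSup B ≤ sSup A ∧ sSup C ≤ sSup B := by
  rcases A.eq_empty_or_nonempty with rfl | hA_ne
  · obtain rfl : B = ∅ := Set.subset_empty_iff.mp hBA
    obtain rfl : C = ∅ := Set.subset_empty_iff.mp hCB
    exact ⟨le_rfl, le_rfl⟩
  · have hC_ne := hne hA_ne
    exact ⟨csSup_le_csSup hA (hC_ne.mono hCB) hBA, csSup_le_csSup (hA.mono hBA) hC_ne hCB⟩

namespace Matrix

variable {n : Type*}

namespace PosSemidef

variable {X : Matrix n n ℝ}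

theorem sq_apply_le_mul_diag (hX : X.PosSemidef) (i j : n) : X i j ^ 2 ≤ X i i * X j j := by
  have hdet := (hX.submatrix ![i, j]).det_nonneg
  have hsymm : X j i = X i j := by simpa using hX.isHermitian.apply i j
  rw [det_fin_two] at hdet
  simp only [submatrix_apply, cons_val_zero, cons_val_one, hsymm] at hdet
  nlinarith

theorem abs_apply_le_half_add_diag (hX : X.PosSemidef) (i j : n) :
    |X i j| ≤ (X i i + X j j) / 2 := by
  have hij := hX.sq_apply_le_mul_diag i j
  have hi : 0 ≤ X i i := hX.diag_nonneg
  have hj : 0 ≤ X j j := hX.diag_nonneg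
  apply abs_le_of_sq_le_sq _ (by positivity)
  nlinarith [sq_nonneg (X i i - X j j)]

variable [Fintype n]

theorem sum_sq_row_le (hX : X.PosSemidef) (i : n) : ∑ j, X i j ^ 2 ≤ X i i * X.trace := by
  rw [trace, mul_sum]
  exact sum_le_sum fun j _ => hX.sq_apply_le_mul_diag i j

theorem sum_mul_mul_abs_apply_le (hX : X.PosSemidef) {w : n → ℝ} (hw : ∀ i, 0 ≤ w i) :
    ∑ i, ∑ j, w i * w j * |X i j| ≤ (∑ i, w i) * ∑ i, w i * X i i := by
  have hsplit : ∀ i j, w i * w j * ((X i i + X j j) / 2)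
      = w i * X i i * w j / 2 + w i * (w j * X j j) / 2 := fun i j => by ring
  calc ∑ i, ∑ j, w i * w j * |X i j|
      ≤ ∑ i, ∑ j, w i * w j * ((X i i + X j j) / 2) :=
        sum_le_sum fun i _ => sum_le_sum fun j _ =>
          mul_le_mul_of_nonneg_left (hX.abs_apply_le_half_add_diag i j) (mul_nonneg (hw i) (hw j))
    _ = (∑ i, w i) * ∑ i, w i * X i i := by
        simp only [hsplit, sum_add_distrib, ← sum_div, ← mul_sum, ← sum_mul]
        ring

variable {z : n → ℝ}

theorem sum_sq_row_le_diag_mul_of_binary (hX : X.PosSemidef) (htr : X.trace = 1)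
    (hz : ∀ i, z i = 0 ∨ z i = 1) (hsupp : ∀ i j, z i = 0 → X i j = 0) (i : n) :
    ∑ j, X i j ^ 2 ≤ X i i * z i := by
  rcases hz i with h | h
  · simp [hsupp i _ h, h]
  · simpa [h, htr] using hX.sum_sq_row_le i

theorem sum_abs_apply_le_sum_of_binary (hX : X.PosSemidef) (htr : X.trace = 1)
    (hz : ∀ i, z i = 0 ∨ z i = 1) (hsupp : ∀ i j, z i = 0 → X i j = 0) :
    ∑ i, ∑ j, |X i j| ≤ ∑ i, z i := by
  have hz_nonneg : ∀ i, 0 ≤ z i := fun i => by rcases hz i with h | h <;> simp [h]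
  have hweight : ∀ i j, |X i j| = z i * z j * |X i j| := fun i j => by
    have hsymm : X j i = X i j := by simpa using hX.isHermitian.apply i j
    rcases hz i with hi | hi
    · simp [hsupp i j hi]
    rcases hz j with hj | hj
    · simp [← hsymm, hsupp j i hj]
    simp [hi, hj]
  have hdiag : ∑ i, z i * X i i ≤ 1 := htr ▸ sum_le_sum fun i _ => by
    rcases hz i with h | h <;> simp [h, hX.diag_nonneg]
  calc ∑ i, ∑ j, |X i j| = ∑ i, ∑ j, z i * z j * |X i j| := by simp_rw [← hweight]
    _ ≤ (∑ i, z i) * ∑ i, z i * X i i := hX.sum_mul_mul_abs_apply_le hz_nonneg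
    _ ≤ ∑ i, z i := mul_le_of_le_one_right (sum_nonneg fun i _ => hz_nonneg i) hdiag

end PosSemidef

variable [Fintype n]

theorem sum_mul_le_sum_abs_of_abs_le_one {S X : Matrix n n ℝ} (hX : ∀ i j, |X i j| ≤ 1) :
    ∑ i, ∑ j, S i j * X i j ≤ ∑ i, ∑ j, |S i j| :=
  sum_le_sum fun i _ => sum_le_sum fun j _ =>
    calc S i j * X i j ≤ |S i j| * |X i j| := (le_abs_self _).trans (abs_mul _ _).le
      _ ≤ |S i j| := mul_le_of_le_one_right (abs_nonneg _) (hX i j)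

theorem trace_le_sum_of_abs_diag_le {X : Matrix n n ℝ} {z : n → ℝ}
    (hz : ∀ i, |X i i| ≤ z i) : X.trace ≤ ∑ i, z i :=
  sum_le_sum fun i _ => (le_abs_self _).trans (hz i)

end Matrix

theorem strengthened_relaxation_sandwich_general (p k : ℕ)
    (S : Matrix (Fin p) (Fin p) ℝ) :
    sSup {v : ℝ | ∃ (z : Fin p → ℝ) (X : Matrix (Fin p) (Fin p) ℝ),
        (∀ i, 0 ≤ z i ∧ z i ≤ 1) ∧ (∑ i, z i) ≤ (k : ℝ) ∧
        X.PosSemidef ∧ X.trace = 1 ∧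
        (∀ i j, |X i j| ≤ (if i = j then (1 : ℝ) else 1 / 2) * z i) ∧
        v = ∑ i, ∑ j, S i j * X i j} ≥
    sSup {v : ℝ | ∃ (z : Fin p → ℝ) (X : Matrix (Fin p) (Fin p) ℝ),
        (∀ i, 0 ≤ z i ∧ z i ≤ 1) ∧ (∑ i, z i) ≤ (k : ℝ) ∧
        X.PosSemidef ∧ X.trace = 1 ∧
        (∀ i j, |X i j| ≤ (if i = j then (1 : ℝ) else 1 / 2) * z i) ∧
        (∀ i, ∑ j, (X i j) ^ 2 ≤ X i i * z i) ∧
        (∑ i, ∑ j, |X i j|) ≤ (k : ℝ) ∧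
        v = ∑ i, ∑ j, S i j * X i j} ∧
    sSup {v : ℝ | ∃ (z : Fin p → ℝ) (X : Matrix (Fin p) (Fin p) ℝ),
        (∀ i, 0 ≤ z i ∧ z i ≤ 1) ∧ (∑ i, z i) ≤ (k : ℝ) ∧
        X.PosSemidef ∧ X.trace = 1 ∧
        (∀ i j, |X i j| ≤ (if i = j then (1 : ℝ) else 1 / 2) * z i) ∧
        (∀ i, ∑ j, (X i j) ^ 2 ≤ X i i * z i) ∧
        (∑ i, ∑ j, |X i j|) ≤ (k : ℝ) ∧
        v = ∑ i, ∑ j, S i j * X i j} ≥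
    sSup {v : ℝ | ∃ (z : Fin p → ℝ) (X : Matrix (Fin p) (Fin p) ℝ),
        (∀ i, z i = 0 ∨ z i = 1) ∧ (∑ i, z i) ≤ (k : ℝ) ∧
        X.PosSemidef ∧ X.trace = 1 ∧
        (∀ i j, |X i j| ≤ (if i = j then (1 : ℝ) else 1 / 2) * z i) ∧
        v = ∑ i, ∑ j, S i j * X i j} := by
  have hsupp : ∀ {z : Fin p → ℝ} {X : Matrix (Fin p) (Fin p) ℝ},
      (∀ i j, |X i j| ≤ (if i = j then (1 : ℝ) else 1 / 2) * z i) → ∀ i j, z i = 0 → X i j = 0 :=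
    fun hM i j hz => abs_nonpos_iff.mp (by simpa [hz] using hM i j)
  refine Real.sSup_le_sSup_of_subset_chain ?_ ?_ ?_ ?_
  · refine ⟨∑ i, ∑ j, |S i j|, ?_⟩
    rintro _ ⟨z, X, hz, -, -, -, hM, rfl⟩
    refine sum_mul_le_sum_abs_of_abs_le_one fun i j => (hM i j).trans ?_
    have := hz i
    split_ifs <;> linarith
  · rintro _ ⟨z, X, hz, hzk, hX, htr, hM, -, -, rfl⟩
    exact ⟨z, X, hz, hzk, hX, htr, hM, rfl⟩
  · rintro _ ⟨z, X, hz, hzk, hX, htr, hM, rfl⟩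
    refine ⟨z, X, fun i => ?_, hzk, hX, htr, hM,
      hX.sum_sq_row_le_diag_mul_of_binary htr hz (hsupp hM),
      (hX.sum_abs_apply_le_sum_of_binary htr hz (hsupp hM)).trans hzk, rfl⟩
    rcases hz i with h | h <;> simp [h]
  · rintro ⟨_, z, X, -, hzk, -, htr, hM, rfl⟩
    have hk : (1 : ℝ) ≤ k :=
      (htr.symm.trans_le (trace_le_sum_of_abs_diag_le fun i => by simpa using hM i i)).trans hzk
    obtain ⟨i₀, -⟩ := nonempty_of_sum_ne_zero (htr.trans_ne one_ne_zero)
    refine ⟨S i₀ i₀, Pi.single i₀ 1, diagonal (Pi.single i₀ 1), fun i => ?_, by simpa using hk,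
      posSemidef_diagonal_iff.mpr fun i => ?_, by simp [trace_diagonal], fun i j => ?_, ?_⟩
    · by_cases h : i = i₀ <;> simp [h]
    · by_cases h : i = i₀ <;> simp [h]
    · rcases eq_or_ne i j with rfl | hij
      · by_cases h : i = i₀ <;> simp [h]
      · by_cases h : i₀ = i <;> simp [h, hij]
    · simp [diagonal_apply, Pi.single_apply]

/-- Sandwich property of the strengthened relaxation:
P_relax ≥ P_strong ≥ P_bin. -/
theorem strengthened_relaxation_sandwich (p k : ℕ) (hk1 : 1 ≤ k) (hkp : k ≤ p)
    (S : Matrix (Fin p) (Fin p) ℝ) (hS : S.PosSemidef) :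
    sSup {v : ℝ | ∃ (z : Fin p → ℝ) (X : Matrix (Fin p) (Fin p) ℝ),
        (∀ i, 0 ≤ z i ∧ z i ≤ 1) ∧ (∑ i, z i) ≤ (k : ℝ) ∧
        X.PosSemidef ∧ X.trace = 1 ∧
        (∀ i j, |X i j| ≤ (if i = j then (1 : ℝ) else 1 / 2) * z i) ∧
        v = ∑ i, ∑ j, S i j * X i j} ≥
    sSup {v : ℝ | ∃ (z : Fin p → ℝ) (X : Matrix (Fin p) (Fin p) ℝ),
        (∀ i, 0 ≤ z i ∧ z i ≤ 1) ∧ (∑ i, z i) ≤ (k : ℝ) ∧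
        X.PosSemidef ∧ X.trace = 1 ∧
        (∀ i j, |X i j| ≤ (if i = j then (1 : ℝ) else 1 / 2) * z i) ∧
        (∀ i, ∑ j, (X i j) ^ 2 ≤ X i i * z i) ∧
        (∑ i, ∑ j, |X i j|) ≤ (k : ℝ) ∧
        v = ∑ i, ∑ j, S i j * X i j} ∧
    sSup {v : ℝ | ∃ (z : Fin p → ℝ) (X : Matrix (Fin p) (Fin p) ℝ),
        (∀ i, 0 ≤ z i ∧ z i ≤ 1) ∧ (∑ i, z i) ≤ (k : ℝ) ∧
        X.PosSemidef ∧ X.trace = 1 ∧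
        (∀ i j, |X i j| ≤ (if i = j then (1 : ℝ) else 1 / 2) * z i) ∧
        (∀ i, ∑ j, (X i j) ^ 2 ≤ X i i * z i) ∧
        (∑ i, ∑ j, |X i j|) ≤ (k : ℝ) ∧
        v = ∑ i, ∑ j, S i j * X i j} ≥
    sSup {v : ℝ | ∃ (z : Fin p → ℝ) (X : Matrix (Fin p) (Fin p) ℝ),
        (∀ i, z i = 0 ∨ z i = 1) ∧ (∑ i, z i) ≤ (k : ℝ) ∧
        X.PosSemidef ∧ X.trace = 1 ∧
        (∀ i j, |X i j| ≤ (if i = j then (1 : ℝ) else 1 / 2) * z i) ∧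
        v = ∑ i, ∑ j, S i j * X i j} :=
  strengthened_relaxation_sandwich_general p k S
end

section
/- Let X ∈ ℝ^{p×p} satisfy X ⪰ 0 and tr(X) = 1, and suppose there is a set S ⊆ [p] with |S| ≤ k such that X_{i,j} = 0 unless both i ∈ S and j ∈ S. Then ∑_{i=1}^p ∑_{j=1}^p |X_{i,j}| ≤ k. -/
/-! Evaluating the quadratic form of a positive semidefinite `X` at `eᵢ ± eⱼ` gives
`|X i j| ≤ (X i i + X j j) / 2`. Summed over `T × T`, this bounds the entrywise ℓ₁ norm by `#T`
times the diagonal mass on `T`, which is at most `tr X = 1`. -/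

open Finset Matrix

lemma Matrix.single_add_smul_single_dotProduct_mulVec {n R : Type*} [Fintype n] [DecidableEq n]
    [CommRing R] (X : Matrix n n R) (i j : n) (s : R) :
    (Pi.single i 1 + s • Pi.single j 1) ⬝ᵥ X *ᵥ (Pi.single i 1 + s • Pi.single j 1)
      = X i i + s * (X i j + X j i) + s ^ 2 * X j j := by
  simp only [mulVec_add, mulVec_smul, dotProduct_add, add_dotProduct, dotProduct_smul,
    smul_dotProduct, mulVec_single_one, single_one_dotProduct, smul_eq_mul, col_apply]
  ring

lemma Matrix.PosSemidef.abs_apply_le {n : Type*} [Fintype n] {X : Matrix n n ℝ}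
    (hX : X.PosSemidef) (i j : n) : |X i j| ≤ (X i i + X j j) / 2 := by
  classical
  have hform (s : ℝ) : 0 ≤ X i i + s * (X i j + X j i) + s ^ 2 * X j j := by
    have := hX.dotProduct_mulVec_nonneg (Pi.single i 1 + s • Pi.single j 1)
    rwa [star_trivial, single_add_smul_single_dotProduct_mulVec] at this
  have hsymm : X j i = X i j := hX.isHermitian.apply i j
  have hplus := hform 1
  have hminus := hform (-1)
  rw [hsymm] at hplus hminus
  rw [abs_le]
  constructor <;> linarith

lemma Finset.sum_sum_add_div_two {ι K : Type*} [Semifield K] [CharZero K] (T : Finset ι)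
    (a : ι → K) :
    ∑ i ∈ T, ∑ j ∈ T, (a i + a j) / 2 = #T * ∑ i ∈ T, a i := by
  simp only [← sum_div, sum_add_distrib, sum_const, nsmul_eq_mul, ← mul_sum]
  ring

lemma Matrix.PosSemidef.sum_sum_abs_le_card_mul_trace {n : Type*} [Fintype n]
    {X : Matrix n n ℝ} (hX : X.PosSemidef) (T : Finset n) :
    ∑ i ∈ T, ∑ j ∈ T, |X i j| ≤ #T * X.trace := calc
  ∑ i ∈ T, ∑ j ∈ T, |X i j| ≤ ∑ i ∈ T, ∑ j ∈ T, (X i i + X j j) / 2 :=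
    sum_le_sum fun i _ ↦ sum_le_sum fun j _ ↦ hX.abs_apply_le i j
  _ = #T * ∑ i ∈ T, X i i := sum_sum_add_div_two T X.diag
  _ ≤ #T * X.trace := by
    gcongr
    exact sum_le_univ_sum_of_nonneg fun i ↦ hX.diag_nonneg

lemma Finset.sum_sum_eq_sum_sum_of_support_subset {ι M : Type*} [Fintype ι] [AddCommMonoid M]
    (T : Finset ι) (f : ι → ι → M) (hf : ∀ i j, ¬(i ∈ T ∧ j ∈ T) → f i j = 0) :
    ∑ i, ∑ j, f i j = ∑ i ∈ T, ∑ j ∈ T, f i j := by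
  simp only [← sum_product']
  exact (sum_subset (subset_univ _) fun x _ hx ↦ hf x.1 x.2 (by simpa using hx)).symm

theorem psd_supported_l1_bound_general (p k : ℕ)
    (X : Matrix (Fin p) (Fin p) ℝ) (hX : X.PosSemidef) (htr : X.trace = 1)
    (T : Finset (Fin p)) (hT : T.card ≤ k)
    (hsupp : ∀ i j, ¬(i ∈ T ∧ j ∈ T) → X i j = 0) :
    ∑ i, ∑ j, |X i j| ≤ (k : ℝ) := calc
  ∑ i, ∑ j, |X i j| = ∑ i ∈ T, ∑ j ∈ T, |X i j| :=
    sum_sum_eq_sum_sum_of_support_subset T _ fun i j hij ↦ by rw [hsupp i j hij, abs_zero]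
  _ ≤ #T * X.trace := hX.sum_sum_abs_le_card_mul_trace T
  _ ≤ k := by rw [htr, mul_one]; exact_mod_cast hT

/-- If X ⪰ 0, tr(X) = 1 and X is supported on a set S of at most k indices,
then the entrywise ℓ₁ norm of X is at most k. -/
theorem psd_supported_l1_bound (p k : ℕ) (hk : 1 ≤ k)
    (X : Matrix (Fin p) (Fin p) ℝ) (hX : X.PosSemidef) (htr : X.trace = 1)
    (T : Finset (Fin p)) (hT : T.card ≤ k)
    (hsupp : ∀ i j, ¬(i ∈ T ∧ j ∈ T) → X i j = 0) :
    ∑ i, ∑ j, |X i j| ≤ (k : ℝ) :=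
  psd_supported_l1_bound_general p k X hX htr T hT hsupp
end
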